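/- Let A and E be real m×n matrices. Let σ₁ ≥ σ₂ denote the two largest singular values of A and set δ := σ₁ − σ₂, and assume δ > 0. Let v₁ be a unit right-singular vector of A corresponding to σ₁ and let v₁' be a unit right-singular vector of A+E corresponding to the largest singular value of A+E. Then, for any such choice of v₁ and v₁', one has sin∠(v₁, v₁') ≤ 2‖E‖/δ. (The same statement holds with left-singular vectors in place of right-singular vectors.) -/

import Mathlib

open MeasureTheory ProbabilityTheory Matrix

theorem Matrix.isHermitian_transpose_mul_self {m n : Type*} [Fintype m] (A : Matrix m n ℝ) :
    (Aᵀ * A).IsHermitian := by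
  simpa using Matrix.isHermitian_conjTranspose_mul_self A

noncomputable def sval {m n : ℕ} (A : Matrix (Fin m) (Fin n) ℝ) (k : ℕ) : ℝ :=
  if h : k - 1 < n then
    Real.sqrt (((Matrix.isHermitian_transpose_mul_self A).eigenvalues ∘
      Tuple.sort (Matrix.isHermitian_transpose_mul_self A).eigenvalues)
      (Fin.rev ⟨k - 1, h⟩))
  else 0

noncomputable def spNorm {m n : Type*} [Fintype m] [Fintype n] [DecidableEq n]
    (A : Matrix m n ℝ) : ℝ :=
  ‖LinearMap.toContinuousLinearMap (Matrix.toEuclideanLin A)‖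

noncomputable def sinAngle {d : ℕ} (u v : Fin d → ℝ) : ℝ :=
  Real.sqrt (1 - (u ⬝ᵥ v) ^ 2 / ((u ⬝ᵥ u) * (v ⬝ᵥ v)))

def Concentrated {Ω : Type*} [MeasurableSpace Ω] (μ : Measure Ω) {m n : ℕ}
    (E : Ω → Matrix (Fin m) (Fin n) ℝ) (C₁ c₁ γ : ℝ) : Prop :=
  ∀ (u : Fin m → ℝ) (v : Fin n → ℝ), u ⬝ᵥ u = 1 → v ⬝ᵥ v = 1 →
    ∀ t : ℝ, 0 < t →
      μ {ω | t < |u ⬝ᵥ ((E ω) *ᵥ v)|} ≤ ENNReal.ofReal (C₁ * Real.exp (-c₁ * t ^ γ))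

noncomputable def symMat {m n : ℕ} (E : Matrix (Fin m) (Fin n) ℝ) :
    Matrix (Fin (m + n)) (Fin (m + n)) ℝ :=
  (Matrix.reindex finSumFinEquiv finSumFinEquiv) (Matrix.fromBlocks 0 E Eᵀ 0)

noncomputable def eigVal {d : ℕ} (M : Matrix (Fin d) (Fin d) ℝ) (k : ℕ) : ℝ := by
  classical
  exact if hM : M.IsHermitian then
    (if h : k - 1 < d then
      ((hM.eigenvalues ∘ Tuple.sort hM.eigenvalues) (Fin.rev ⟨k - 1, h⟩))
    else 0)
  else 0

noncomputable def toE {n : ℕ} (v : Fin n → ℝ) : EuclideanSpace ℝ (Fin n) :=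
  (WithLp.equiv 2 (Fin n → ℝ)).symm v

noncomputable def projSub {n : ℕ} (K : Submodule ℝ (EuclideanSpace ℝ (Fin n))) :
    EuclideanSpace ℝ (Fin n) →L[ℝ] EuclideanSpace ℝ (Fin n) :=
  K.subtypeL.comp (K.orthogonalProjectionOnto)

noncomputable def projSpan {n : ℕ} (S : Set (Fin n → ℝ)) :
    EuclideanSpace ℝ (Fin n) →L[ℝ] EuclideanSpace ℝ (Fin n) :=
  projSub (Submodule.span ℝ (toE '' S))

noncomputable def sinAngleSub {n : ℕ} (S T : Set (Fin n → ℝ)) : ℝ :=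
  ‖projSpan S - projSpan T‖

def IsBernoulliMatrix {Ω : Type*} [MeasurableSpace Ω] (μ : Measure Ω) {n : ℕ}
    (E : Ω → Matrix (Fin n) (Fin n) ℝ) : Prop :=
  (∀ i j, Measurable fun ω => E ω i j) ∧
  iIndepFun (β := fun _ : Fin n × Fin n => ℝ)
    (fun p ω => E ω p.1 p.2) μ ∧
  (∀ i j, μ {ω | E ω i j = 1} = ENNReal.ofReal (1/2) ∧
          μ {ω | E ω i j = -1} = ENNReal.ofReal (1/2))

/-!
Write `v₁' = c v₁ + p` with `p ⊥ v₁`, so that `‖p‖ = sin∠(v₁, v₁')`. As `v₁` is a top eigenvector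
of `AᵀA` and `p ⊥ v₁`, `‖A p‖ ≤ σ₂ ‖p‖`. Testing the eigen-equation of `(A + E)ᵀ(A + E)` (top
eigenvalue `σ₁'²`) against `p` gives
`σ₁'² ‖p‖² = ‖A p‖² + ⟪A p, E v₁'⟫ + ⟪E p, (A + E) v₁'⟫ ≤ σ₂² ‖p‖² + ‖E‖ ‖p‖ (σ₂ + σ₁')`,
hence the Wedin-type bound `(σ₁' - σ₂) sin∠ ≤ ‖E‖`. Weyl's inequality `σ₁ ≤ σ₁' + ‖E‖` and
`sin∠ ≤ 1` then give `(σ₁ - σ₂) sin∠ ≤ 2 ‖E‖`.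
-/

section EuclideanDotProduct

variable {m n : ℕ}

lemma inner_toE (u v : Fin n → ℝ) : inner ℝ (toE u) (toE v) = u ⬝ᵥ v := by
  simp [toE, EuclideanSpace.inner_eq_star_dotProduct, dotProduct, mul_comm]

lemma norm_toE_sq (u : Fin n → ℝ) : ‖toE u‖ ^ 2 = u ⬝ᵥ u := by
  rw [← real_inner_self_eq_norm_sq, inner_toE]

lemma norm_toE_eq_sqrt (u : Fin n → ℝ) : ‖toE u‖ = √(u ⬝ᵥ u) := by
  rw [← norm_toE_sq, Real.sqrt_sq (norm_nonneg _)]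

lemma dotProduct_le_norm_toE_mul_norm_toE (u w : Fin n → ℝ) :
    u ⬝ᵥ w ≤ ‖toE u‖ * ‖toE w‖ := by
  rw [← inner_toE]
  exact real_inner_le_norm _ _

lemma norm_toE_mulVec_le_spNorm_mul (M : Matrix (Fin m) (Fin n) ℝ) (x : Fin n → ℝ) :
    ‖toE (M *ᵥ x)‖ ≤ spNorm M * ‖toE x‖ :=
  (LinearMap.toContinuousLinearMap (toEuclideanLin M)).le_opNorm (toE x)

lemma mulVec_dotProduct_mulVec (M : Matrix (Fin m) (Fin n) ℝ) (x y : Fin n → ℝ) :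
    (M *ᵥ x) ⬝ᵥ (M *ᵥ y) = x ⬝ᵥ ((Mᵀ * M) *ᵥ y) := by
  rw [← mulVec_mulVec, dotProduct_mulVec x, vecMul_transpose]

lemma norm_toE_mulVec_le_of_dotProduct_le (M : Matrix (Fin m) (Fin n) ℝ) {x : Fin n → ℝ}
    {c : ℝ} (hc : 0 ≤ c) (h : x ⬝ᵥ ((Mᵀ * M) *ᵥ x) ≤ c ^ 2 * (x ⬝ᵥ x)) :
    ‖toE (M *ᵥ x)‖ ≤ c * ‖toE x‖ := by
  rwa [← sq_le_sq₀ (norm_nonneg _) (by positivity), mul_pow, norm_toE_sq, norm_toE_sq,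
    mulVec_dotProduct_mulVec]

lemma norm_toE_mulVec_of_eigenvector (M : Matrix (Fin m) (Fin n) ℝ) {x : Fin n → ℝ} {c : ℝ}
    (hc : 0 ≤ c) (hx : (Mᵀ * M) *ᵥ x = c ^ 2 • x) :
    ‖toE (M *ᵥ x)‖ = c * ‖toE x‖ := by
  rw [← sq_eq_sq₀ (norm_nonneg _) (by positivity), mul_pow, norm_toE_sq, norm_toE_sq,
    mulVec_dotProduct_mulVec, hx, dotProduct_smul, smul_eq_mul]

end EuclideanDotProduct

lemma OrthonormalBasis.sum_dotProduct_mul_dotProduct {ι : Type*} [Fintype ι] {n : ℕ}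
    (b : OrthonormalBasis ι ℝ (EuclideanSpace ℝ (Fin n))) (x y : Fin n → ℝ) :
    ∑ i, (⇑(b i) ⬝ᵥ x) * (⇑(b i) ⬝ᵥ y) = x ⬝ᵥ y := by
  rw [← inner_toE x y, ← b.sum_inner_mul_inner]
  refine Finset.sum_congr rfl fun i _ => ?_
  rw [real_inner_comm, ← inner_toE (b i), ← inner_toE (b i)]
  rfl

namespace Matrix.IsHermitian

variable {n : ℕ} {H : Matrix (Fin n) (Fin n) ℝ} (hH : H.IsHermitian)

lemma eigenvectorBasis_dotProduct_mulVec (x : Fin n → ℝ) (i : Fin n) :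
    ⇑(hH.eigenvectorBasis i) ⬝ᵥ (H *ᵥ x) =
      hH.eigenvalues i * (⇑(hH.eigenvectorBasis i) ⬝ᵥ x) := by
  rw [dotProduct_mulVec, ← mulVec_transpose, ← conjTranspose_eq_transpose_of_trivial, hH.eq,
    hH.mulVec_eigenvectorBasis, smul_dotProduct]
  rfl

lemma dotProduct_mulVec_le {x : Fin n → ℝ} {μ : ℝ}
    (h : ∀ i, ⇑(hH.eigenvectorBasis i) ⬝ᵥ x ≠ 0 → hH.eigenvalues i ≤ μ) :
    x ⬝ᵥ (H *ᵥ x) ≤ μ * (x ⬝ᵥ x) := by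
  rw [← hH.eigenvectorBasis.sum_dotProduct_mul_dotProduct,
    ← hH.eigenvectorBasis.sum_dotProduct_mul_dotProduct, Finset.mul_sum]
  refine Finset.sum_le_sum fun i _ => ?_
  rw [hH.eigenvectorBasis_dotProduct_mulVec]
  by_cases hi : ⇑(hH.eigenvectorBasis i) ⬝ᵥ x = 0
  · simp [hi]
  · nlinarith [h i hi, mul_self_nonneg (⇑(hH.eigenvectorBasis i) ⬝ᵥ x)]

lemma eigenvectorBasis_dotProduct_eq_zero_of_eigenvalues_ne {v : Fin n → ℝ} {μ : ℝ}
    (hv : H *ᵥ v = μ • v) {i : Fin n} (hi : hH.eigenvalues i ≠ μ) :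
    ⇑(hH.eigenvectorBasis i) ⬝ᵥ v = 0 := by
  have h := hH.eigenvectorBasis_dotProduct_mulVec v i
  rw [hv, dotProduct_smul, smul_eq_mul] at h
  by_contra hne
  exact hi (mul_right_cancel₀ hne h).symm

end Matrix.IsHermitian

namespace Tuple

variable {α : Type*} [LinearOrder α] {n : ℕ} (f : Fin n → α)

lemma apply_le_apply_sort_rev_zero (hn : 0 < n) (i : Fin n) :
    f i ≤ f (sort f (Fin.rev ⟨0, hn⟩)) := by
  have h := monotone_sort f (show (sort f).symm i ≤ Fin.rev ⟨0, hn⟩ by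
    have := ((sort f).symm i).isLt
    simp only [Fin.le_def, Fin.val_rev]
    omega)
  simpa using h

lemma apply_le_apply_sort_rev_one (hn : 1 < n) {i : Fin n}
    (hi : i ≠ sort f (Fin.rev ⟨0, by omega⟩)) : f i ≤ f (sort f (Fin.rev ⟨1, hn⟩)) := by
  have hne : (sort f).symm i ≠ Fin.rev ⟨0, by omega⟩ := fun h => hi (by simp [← h])
  have h := monotone_sort f (show (sort f).symm i ≤ Fin.rev ⟨1, hn⟩ by
    have := ((sort f).symm i).isLt
    have := Fin.val_ne_of_ne hne
    simp only [Fin.le_def, Fin.val_rev] at this ⊢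
    omega)
  simpa using h

end Tuple

section SingularValues

variable {m n : ℕ} (A : Matrix (Fin m) (Fin n) ℝ)

lemma sval_nonneg (k : ℕ) : 0 ≤ sval A k := by
  unfold sval
  split
  · exact Real.sqrt_nonneg _
  · exact le_rfl

lemma exists_eigenvalues_eq_sval_one_sq (hn : 0 < n) :
    ∃ j, (isHermitian_transpose_mul_self A).eigenvalues j = sval A 1 ^ 2 ∧
      (∀ i, (isHermitian_transpose_mul_self A).eigenvalues i ≤ sval A 1 ^ 2) ∧
      ∀ i ≠ j, (isHermitian_transpose_mul_self A).eigenvalues i ≤ sval A 2 ^ 2 := by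
  set f := (isHermitian_transpose_mul_self A).eigenvalues
  have hf : ∀ i, 0 ≤ f i := (posSemidef_conjTranspose_mul_self A).eigenvalues_nonneg
  have h1 : sval A 1 ^ 2 = f (Tuple.sort f (Fin.rev ⟨0, hn⟩)) := by
    rw [sval, dif_pos (by omega), Function.comp_apply, Real.sq_sqrt (hf _)]
  refine ⟨_, h1.symm, fun i => h1 ▸ Tuple.apply_le_apply_sort_rev_zero f hn i, fun i hi => ?_⟩
  rcases lt_or_ge 1 n with h2 | h2
  · rw [sval, dif_pos (by omega), Function.comp_apply, Real.sq_sqrt (hf _)]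
    exact Tuple.apply_le_apply_sort_rev_one f h2 hi
  · exact absurd (Fin.ext (by omega)) hi

lemma norm_toE_mulVec_le_sval_one_mul (x : Fin n → ℝ) :
    ‖toE (A *ᵥ x)‖ ≤ sval A 1 * ‖toE x‖ := by
  rcases Nat.eq_zero_or_pos n with rfl | hn
  · simp only [Subsingleton.elim x 0, mulVec_zero]
    simp [toE, mul_nonneg (sval_nonneg A 1)]
  obtain ⟨j, hj, htop, -⟩ := exists_eigenvalues_eq_sval_one_sq A hn
  exact norm_toE_mulVec_le_of_dotProduct_le A (sval_nonneg A 1)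
    ((isHermitian_transpose_mul_self A).dotProduct_mulVec_le fun i _ => htop i)

lemma sval_one_le_sval_one_add_spNorm (E : Matrix (Fin m) (Fin n) ℝ) :
    sval A 1 ≤ sval (A + E) 1 + spNorm E := by
  rcases Nat.eq_zero_or_pos n with rfl | hn
  · simp [sval, spNorm]
  obtain ⟨j, hj, -, -⟩ := exists_eigenvalues_eq_sval_one_sq A hn
  set hH := isHermitian_transpose_mul_self A
  set v : Fin n → ℝ := ⇑(hH.eigenvectorBasis j)
  have hv : ‖toE v‖ = 1 := hH.eigenvectorBasis.orthonormal.1 j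
  have hAv : ‖toE (A *ᵥ v)‖ = sval A 1 := by
    rw [norm_toE_mulVec_of_eigenvector A (sval_nonneg A 1)
      (by rw [← hj]; exact hH.mulVec_eigenvectorBasis j), hv, mul_one]
  calc sval A 1 = ‖toE ((A + E) *ᵥ v - E *ᵥ v)‖ := by
        rw [add_mulVec, add_sub_cancel_right, hAv]
    _ ≤ ‖toE ((A + E) *ᵥ v)‖ + ‖toE (E *ᵥ v)‖ := norm_sub_le (toE _) (toE _)
    _ ≤ sval (A + E) 1 + spNorm E := by
        simpa [hv] using add_le_add (norm_toE_mulVec_le_sval_one_mul (A + E) v)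
          (norm_toE_mulVec_le_spNorm_mul E v)

lemma norm_toE_mulVec_le_sval_two_mul_of_orthogonal {v x : Fin n → ℝ}
    (hv : (Aᵀ * A) *ᵥ v = sval A 1 ^ 2 • v) (hv0 : v ≠ 0) (hx : v ⬝ᵥ x = 0) :
    ‖toE (A *ᵥ x)‖ ≤ sval A 2 * ‖toE x‖ := by
  have hn : 0 < n := by
    rcases Nat.eq_zero_or_pos n with rfl | hn
    · exact absurd (Subsingleton.elim v 0) hv0
    · exact hn
  obtain ⟨j, hj, -, hsecond⟩ := exists_eigenvalues_eq_sval_one_sq A hn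
  set hH := isHermitian_transpose_mul_self A
  set b := hH.eigenvectorBasis
  refine norm_toE_mulVec_le_of_dotProduct_le A (sval_nonneg A 2)
    (hH.dotProduct_mulVec_le fun i hi => ?_)
  rcases ne_or_eq i j with hij | rfl
  · exact hsecond i hij
  by_contra hgap
  rw [not_le, hj] at hgap
  -- Across a spectral gap the eigenvector `v` is a multiple of `b i`, so `x ⊥ v` gives `x ⊥ b i`.
  have hoff : ∀ k ≠ i, ⇑(b k) ⬝ᵥ v = 0 := fun k hk =>
    hH.eigenvectorBasis_dotProduct_eq_zero_of_eigenvalues_ne hv ((hsecond k hk).trans_lt hgap).ne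
  have hvi : ⇑(b i) ⬝ᵥ v ≠ 0 := by
    intro h0
    apply hv0
    rw [← dotProduct_self_eq_zero, ← b.sum_dotProduct_mul_dotProduct]
    refine Finset.sum_eq_zero fun k _ => ?_
    rcases eq_or_ne k i with rfl | hk
    · simp [h0]
    · simp [hoff k hk]
  rw [← b.sum_dotProduct_mul_dotProduct,
    Finset.sum_eq_single i (fun k _ hk => by simp [hoff k hk]) (by simp)] at hx
  exact hi ((mul_eq_zero.mp hx).resolve_left hvi)

end SingularValues

section Angles

variable {n : ℕ}

lemma sinAngle_le_one (u v : Fin n → ℝ) : sinAngle u v ≤ 1 :=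
  Real.sqrt_le_one.mpr <| sub_le_self _ <| div_nonneg (sq_nonneg _) <|
    mul_nonneg (norm_toE_sq u ▸ sq_nonneg _) (norm_toE_sq v ▸ sq_nonneg _)

lemma sinAngle_eq_norm_toE_sub {u v : Fin n → ℝ} (hu : u ⬝ᵥ u = 1) (hv : v ⬝ᵥ v = 1) :
    sinAngle u v = ‖toE (v - (u ⬝ᵥ v) • u)‖ := by
  rw [sinAngle, norm_toE_eq_sqrt, hu, hv]
  congr 1
  simp only [dotProduct_sub, sub_dotProduct, dotProduct_smul, smul_dotProduct, smul_eq_mul, hu,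
    hv, dotProduct_comm v u]
  ring

end Angles

-- The hypothesis factors as `(σ + τ) s ((σ - τ) s - ε) ≤ 0`.
lemma sub_mul_le_of_sq_mul_sq_le {σ τ s ε : ℝ} (hτ : 0 ≤ τ) (hs : 0 ≤ s) (hε : 0 ≤ ε)
    (h : σ ^ 2 * s ^ 2 ≤ (τ * s) ^ 2 + ε * s * (τ + σ)) : (σ - τ) * s ≤ ε := by
  by_contra! hlt
  have hpos : 0 < (σ + τ) * s := by nlinarith
  nlinarith [mul_lt_mul_of_pos_left (sub_pos.mpr hlt) hpos]

theorem sval_sub_sval_mul_sinAngle_le {m n : ℕ} (A E : Matrix (Fin m) (Fin n) ℝ)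
    {v v' : Fin n → ℝ} (hu : v ⬝ᵥ v = 1) (hu' : v' ⬝ᵥ v' = 1)
    (hv : (Aᵀ * A) *ᵥ v = sval A 1 ^ 2 • v)
    (hv' : ((A + E)ᵀ * (A + E)) *ᵥ v' = sval (A + E) 1 ^ 2 • v') :
    (sval (A + E) 1 - sval A 2) * sinAngle v v' ≤ spNorm E := by
  set p := v' - (v ⬝ᵥ v') • v
  have hvp : v ⬝ᵥ p = 0 := by simp [p, dotProduct_sub, dotProduct_smul, hu]
  have hv'_eq : v' = p + (v ⬝ᵥ v') • v := (sub_add_cancel _ _).symm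
  have hpv' : p ⬝ᵥ v' = p ⬝ᵥ p := by
    rw [hv'_eq, dotProduct_add, dotProduct_smul, dotProduct_comm p v, hvp, smul_zero, add_zero]
  rw [sinAngle_eq_norm_toE_sub hu hu']
  set s := ‖toE p‖
  set σ := sval (A + E) 1
  set τ := sval A 2
  set ε := spNorm E
  have hAp : ‖toE (A *ᵥ p)‖ ≤ τ * s :=
    norm_toE_mulVec_le_sval_two_mul_of_orthogonal A hv (by rintro rfl; simp at hu) hvp
  have hEp : ‖toE (E *ᵥ p)‖ ≤ ε * s := norm_toE_mulVec_le_spNorm_mul E p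
  have hEv' : ‖toE (E *ᵥ v')‖ ≤ ε := by
    simpa [norm_toE_eq_sqrt, hu'] using norm_toE_mulVec_le_spNorm_mul E v'
  have hBv' : ‖toE ((A + E) *ᵥ v')‖ = σ := by
    simpa [norm_toE_eq_sqrt, hu'] using
      norm_toE_mulVec_of_eigenvector (A + E) (sval_nonneg _ 1) hv'
  have hApAv' : (A *ᵥ p) ⬝ᵥ (A *ᵥ v') = (A *ᵥ p) ⬝ᵥ (A *ᵥ p) := by
    rw [mulVec_dotProduct_mulVec, mulVec_dotProduct_mulVec, hv'_eq, mulVec_add, mulVec_smul, hv,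
      dotProduct_add, dotProduct_smul, dotProduct_smul, dotProduct_comm p v, hvp]
    simp
  have key : σ ^ 2 * s ^ 2 = ‖toE (A *ᵥ p)‖ ^ 2 + (A *ᵥ p) ⬝ᵥ (E *ᵥ v')
      + (E *ᵥ p) ⬝ᵥ ((A + E) *ᵥ v') := by
    calc σ ^ 2 * s ^ 2 = ((A + E) *ᵥ p) ⬝ᵥ ((A + E) *ᵥ v') := by
          rw [mulVec_dotProduct_mulVec, hv', dotProduct_smul, smul_eq_mul, hpv', norm_toE_sq]
      _ = _ := by
          rw [add_mulVec, add_mulVec, add_dotProduct, dotProduct_add, hApAv', norm_toE_sq]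
  have hτ : 0 ≤ τ := sval_nonneg A 2
  have hε : 0 ≤ ε := norm_nonneg _
  have h₁ : (A *ᵥ p) ⬝ᵥ (E *ᵥ v') ≤ τ * s * ε :=
    (dotProduct_le_norm_toE_mul_norm_toE _ _).trans
      (mul_le_mul hAp hEv' (norm_nonneg _) (by positivity))
  have h₂ : (E *ᵥ p) ⬝ᵥ ((A + E) *ᵥ v') ≤ ε * s * σ :=
    (dotProduct_le_norm_toE_mul_norm_toE _ _).trans
      (hBv' ▸ mul_le_mul_of_nonneg_right hEp (norm_nonneg _))
  refine sub_mul_le_of_sq_mul_sq_le hτ (norm_nonneg _) hε ?_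
  rw [key]
  nlinarith [pow_le_pow_left₀ (norm_nonneg _) hAp 2]

theorem stmt0 {m n : ℕ} (A E : Matrix (Fin m) (Fin n) ℝ)
    (hdelta : 0 < sval A 1 - sval A 2)
    (v₁ v₁' : Fin n → ℝ)
    (hu : v₁ ⬝ᵥ v₁ = 1) (hu' : v₁' ⬝ᵥ v₁' = 1)
    (hv : (Aᵀ * A) *ᵥ v₁ = (sval A 1) ^ 2 • v₁)
    (hv' : ((A + E)ᵀ * (A + E)) *ᵥ v₁' = (sval (A + E) 1) ^ 2 • v₁') :
    sinAngle v₁ v₁' ≤ 2 * spNorm E / (sval A 1 - sval A 2) := by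
  have hweyl := sval_one_le_sval_one_add_spNorm A E
  have hwedin := sval_sub_sval_mul_sinAngle_le A E hu hu' hv hv'
  have hs : 0 ≤ sinAngle v₁ v₁' := Real.sqrt_nonneg _
  have hε : 0 ≤ spNorm E := norm_nonneg _
  rw [le_div_iff₀ hdelta]
  nlinarith [mul_le_mul_of_nonneg_right hweyl hs,
    mul_le_mul_of_nonneg_left (sinAngle_le_one v₁ v₁') hε]
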